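/- arXiv:1906.10305 — 2 statements merged into one kernel-verified Lean document; each statement's English description precedes it below -/
import Mathlib

section
/- Let F̂ be the least concave majorant of the empirical distribution function F_n of a sample from a distribution function F that is concave on ℝ₊. Then ‖F̂ − F‖_∞ ≤ ‖F_n − F‖_∞ (Marshall's lemma). -/
open Set

/-- Least concave majorant of `θ` over `T`. -/
noncomputable def leastConcaveMajorant (T : Set ℝ) (θ : ℝ → ℝ) (x : ℝ) : ℝ :=
  sInf {y : ℝ | ∃ g : ℝ → ℝ, ConcaveOn ℝ T g ∧ BddAbove (g '' T) ∧ BddBelow (g '' T) ∧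
    (∀ t ∈ T, θ t ≤ g t) ∧ y = g x}

/-- Marshall's lemma: if `F` is a concave nondecreasing cdf on `ℝ₊`
with values in `[0,1]` and `Fn` takes values in `[0,1]`, then the least concave
majorant `F̂` of `Fn` satisfies `‖F̂ − F‖_∞ ≤ ‖Fn − F‖_∞`. -/
theorem marshall_lemma (F Fn : ℝ → ℝ)
    (hFconc : ConcaveOn ℝ (Set.Ici 0) F)
    (hFmono : MonotoneOn F (Set.Ici 0))
    (hFrange : ∀ x ∈ Set.Ici (0 : ℝ), F x ∈ Set.Icc (0 : ℝ) 1)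
    (hFnrange : ∀ x ∈ Set.Ici (0 : ℝ), Fn x ∈ Set.Icc (0 : ℝ) 1) :
    sSup {d : ℝ | ∃ x ∈ Set.Ici (0 : ℝ),
        d = |leastConcaveMajorant (Set.Ici 0) Fn x - F x|}
      ≤ sSup {d : ℝ | ∃ x ∈ Set.Ici (0 : ℝ), d = |Fn x - F x|} := by
  set S₂ : Set ℝ := {d : ℝ | ∃ x ∈ Set.Ici (0 : ℝ), d = |Fn x - F x|} with hS₂
  set ε : ℝ := sSup S₂ with hε
  have hbdd : BddAbove S₂ := by
    refine ⟨1, ?_⟩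
    rintro d ⟨x, hx, rfl⟩
    have h1 := hFrange x hx
    have h2 := hFnrange x hx
    rw [abs_sub_le_iff]
    constructor <;> [linarith [h1.1, h2.2]; linarith [h1.2, h2.1]]
  have hle : ∀ t ∈ Set.Ici (0 : ℝ), |Fn t - F t| ≤ ε := fun t ht =>
    le_csSup hbdd ⟨t, ht, rfl⟩
  have hε0 : 0 ≤ ε := le_trans (abs_nonneg _) (hle 0 (mem_Ici.mpr le_rfl))
  -- the majorant g = F + ε
  set g : ℝ → ℝ := fun x => F x + ε with hg
  have hgconc : ConcaveOn ℝ (Set.Ici 0) g :=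
    hFconc.add (concaveOn_const ε (convex_Ici 0))
  have hgBddAbove : BddAbove (g '' Set.Ici 0) := by
    refine ⟨1 + ε, ?_⟩
    rintro y ⟨x, hx, rfl⟩
    have := (hFrange x hx).2
    simp only [hg]; linarith
  have hgBddBelow : BddBelow (g '' Set.Ici 0) := by
    refine ⟨0, ?_⟩
    rintro y ⟨x, hx, rfl⟩
    have := (hFrange x hx).1
    simp only [hg]; linarith
  have hgdom : ∀ t ∈ Set.Ici (0 : ℝ), Fn t ≤ g t := by
    intro t ht
    have := hle t ht
    have := abs_le.mp this
    simp only [hg]; linarith [this.1, this.2]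
  have key : ∀ x ∈ Set.Ici (0 : ℝ),
      |leastConcaveMajorant (Set.Ici 0) Fn x - F x| ≤ ε := by
    intro x hx
    have hmem : g x ∈ {y : ℝ | ∃ g' : ℝ → ℝ, ConcaveOn ℝ (Set.Ici 0) g' ∧
        BddAbove (g' '' Set.Ici 0) ∧ BddBelow (g' '' Set.Ici 0) ∧
        (∀ t ∈ Set.Ici (0:ℝ), Fn t ≤ g' t) ∧ g x = g' x} :=
      ⟨g, hgconc, hgBddAbove, hgBddBelow, hgdom, rfl⟩
    have hlow : ∀ y ∈ {y : ℝ | ∃ g' : ℝ → ℝ, ConcaveOn ℝ (Set.Ici 0) g' ∧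
        BddAbove (g' '' Set.Ici 0) ∧ BddBelow (g' '' Set.Ici 0) ∧
        (∀ t ∈ Set.Ici (0:ℝ), Fn t ≤ g' t) ∧ y = g' x}, Fn x ≤ y := by
      rintro y ⟨g', _, _, _, hdom, rfl⟩
      exact hdom x hx
    have hub : leastConcaveMajorant (Set.Ici 0) Fn x ≤ g x :=
      csInf_le ⟨Fn x, hlow⟩ hmem
    have hlb : Fn x ≤ leastConcaveMajorant (Set.Ici 0) Fn x :=
      le_csInf ⟨g x, hmem⟩ hlow
    have habs := abs_le.mp (hle x hx)
    rw [abs_sub_le_iff]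
    constructor
    · have : g x = F x + ε := rfl
      linarith
    · linarith [habs.2]
  refine csSup_le ⟨|leastConcaveMajorant (Set.Ici 0) Fn 0 - F 0|, 0, mem_Ici.mpr le_rfl, rfl⟩ ?_
  rintro d ⟨x, hx, rfl⟩
  exact key x hx
end

section
/- Let F be twice continuously differentiable and strictly concave on ℝ₊ with density f > 0 and f' < 0, and define β̄(ε) = inf over 0 ≤ x ≤ F⁻¹(1−ε) of (−f'(x))/f(x)². Then for grid points a_{j−1} = F⁻¹((j−1)/k), a_j = F⁻¹(j/k), a_{j+1} = F⁻¹((j+1)/k) with 1 ≤ j ≤ k−2, the ratio of consecutive increments satisfies (a_{j+1} − a_j)/(a_j − a_{j−1}) ≥ 1 + (1/(2k)) β̄(1/(2k)). -/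
/-!
With `h = 1/k`, the mean value theorem and the monotonicity of `f` give `f(b) (b - a) ≤ h`.
On `[b, c]` the function `1/f` has derivative `-f'/f² ≥ β := β̄(h/2)`, so
`1/f(t) - 1/f(b) ≥ β (t - b)`; combined with `F t - F b ≤ f(b) (t - b)` this yields
`f(b) - f(t) ≥ β f(t) (F t - F b)`. This is the nonnegativity of the derivative of
`t ↦ f(b) (t - b) - (F t - F b) - β/2 (F t - F b)²`, hence `f(b) (c - b) ≥ h + β h²/2`.
Dividing the two bounds gives `(c - b)/(b - a) ≥ 1 + β h/2`.
-/

open Set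

/-- `β̄(ε) = inf_{0 ≤ x ≤ F⁻¹(1−ε)} (−f'(x))/f(x)²`, written via the condition
`F x ≤ 1 − ε` (equivalent to `x ≤ F⁻¹(1−ε)` for strictly increasing `F`). -/
noncomputable def betaBar (F : ℝ → ℝ) (ε : ℝ) : ℝ :=
  sInf {y : ℝ | ∃ x : ℝ, 0 ≤ x ∧ F x ≤ 1 - ε ∧
    y = (-(deriv (deriv F) x)) / (deriv F x) ^ 2}

section

variable {F f f' g g' : ℝ → ℝ} {x y β : ℝ}

theorem monotoneOn_Icc_of_hasDerivAt_nonneg (hg : ∀ t ∈ Icc x y, HasDerivAt g (g' t) t)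
    (hg' : ∀ t ∈ Ioo x y, 0 ≤ g' t) : MonotoneOn g (Icc x y) :=
  monotoneOn_of_hasDerivWithinAt_nonneg (convex_Icc x y)
    (fun t ht => (hg t ht).continuousAt.continuousWithinAt)
    (fun t ht => (hg t (interior_subset ht)).hasDerivWithinAt)
    (by simpa only [interior_Icc] using hg')

theorem antitoneOn_Icc_of_hasDerivAt_nonpos (hg : ∀ t ∈ Icc x y, HasDerivAt g (g' t) t)
    (hg' : ∀ t ∈ Ioo x y, g' t ≤ 0) : AntitoneOn g (Icc x y) :=
  antitoneOn_of_hasDerivWithinAt_nonpos (convex_Icc x y)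
    (fun t ht => (hg t ht).continuousAt.continuousWithinAt)
    (fun t ht => (hg t (interior_subset ht)).hasDerivWithinAt)
    (by simpa only [interior_Icc] using hg')

theorem mul_sub_le_sub_of_antitoneOn (hF : ∀ t ∈ Icc x y, HasDerivAt F (f t) t)
    (hf : AntitoneOn f (Icc x y)) (hxy : x ≤ y) : f y * (y - x) ≤ F y - F x := by
  have hmono : MonotoneOn (fun t => F t - f y * t) (Icc x y) :=
    monotoneOn_Icc_of_hasDerivAt_nonneg
      (fun t ht => (hF t ht).sub ((hasDerivAt_id t).const_mul (f y)))
      (fun t ht => by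
        have := hf (Ioo_subset_Icc_self ht) (right_mem_Icc.2 hxy) ht.2.le
        simp only [mul_one]; linarith)
  have := hmono (left_mem_Icc.2 hxy) (right_mem_Icc.2 hxy) hxy
  linarith

theorem sub_le_mul_sub_of_antitoneOn (hF : ∀ t ∈ Icc x y, HasDerivAt F (f t) t)
    (hf : AntitoneOn f (Icc x y)) (hxy : x ≤ y) : F y - F x ≤ f x * (y - x) := by
  have hmono : MonotoneOn (fun t => f x * t - F t) (Icc x y) :=
    monotoneOn_Icc_of_hasDerivAt_nonneg
      (fun t ht => ((hasDerivAt_id t).const_mul (f x)).sub (hF t ht))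
      (fun t ht => by
        have := hf (left_mem_Icc.2 hxy) (Ioo_subset_Icc_self ht) ht.1.le
        simp only [mul_one]; linarith)
  have := hmono (left_mem_Icc.2 hxy) (right_mem_Icc.2 hxy) hxy
  linarith

theorem mul_sub_le_inv_sub_inv (hf : ∀ t ∈ Icc x y, HasDerivAt f (f' t) t)
    (hpos : ∀ t ∈ Icc x y, 0 < f t) (hβ : ∀ t ∈ Ioo x y, β ≤ -f' t / f t ^ 2) (hxy : x ≤ y) :
    β * (y - x) ≤ (f y)⁻¹ - (f x)⁻¹ := by
  have hmono : MonotoneOn (fun t => (f t)⁻¹ - β * t) (Icc x y) :=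
    monotoneOn_Icc_of_hasDerivAt_nonneg
      (fun t ht => ((hf t ht).inv (hpos t ht).ne').sub ((hasDerivAt_id t).const_mul β))
      (fun t ht => by simp only [mul_one, sub_nonneg]; exact hβ t ht)
  have := hmono (left_mem_Icc.2 hxy) (right_mem_Icc.2 hxy) hxy
  simp only at this
  linarith

theorem mul_mul_sub_le_sub (hF : ∀ t ∈ Icc x y, HasDerivAt F (f t) t)
    (hf : ∀ t ∈ Icc x y, HasDerivAt f (f' t) t) (hpos : ∀ t ∈ Icc x y, 0 < f t) (hβ₀ : 0 ≤ β)
    (hβ : ∀ t ∈ Ioo x y, β ≤ -f' t / f t ^ 2) (hxy : x ≤ y) :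
    β * f y * (F y - F x) ≤ f x - f y := by
  have hanti : AntitoneOn f (Icc x y) :=
    antitoneOn_Icc_of_hasDerivAt_nonpos hf fun t ht => by
      have := (le_div_iff₀ (pow_pos (hpos t (Ioo_subset_Icc_self ht)) 2)).1 (hβ₀.trans (hβ t ht))
      linarith
  have hFxy := sub_le_mul_sub_of_antitoneOn hF hanti hxy
  have hinv := mul_sub_le_inv_sub_inv hf hpos hβ hxy
  have hx := hpos x (left_mem_Icc.2 hxy)
  have hy := hpos y (right_mem_Icc.2 hxy)
  calc β * f y * (F y - F x) ≤ β * f y * (f x * (y - x)) := by gcongr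
    _ = f x * f y * (β * (y - x)) := by ring
    _ ≤ f x * f y * ((f y)⁻¹ - (f x)⁻¹) := by gcongr
    _ = f x - f y := by field_simp

theorem sub_add_mul_sq_le_mul_sub (hF : ∀ t ∈ Icc x y, HasDerivAt F (f t) t)
    (hf : ∀ t ∈ Icc x y, HasDerivAt f (f' t) t) (hpos : ∀ t ∈ Icc x y, 0 < f t) (hβ₀ : 0 ≤ β)
    (hβ : ∀ t ∈ Ioo x y, β ≤ -f' t / f t ^ 2) (hxy : x ≤ y) :
    F y - F x + β / 2 * (F y - F x) ^ 2 ≤ f x * (y - x) := by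
  have hmono : MonotoneOn (fun t => f x * t - F t - β / 2 * (F t - F x) ^ 2) (Icc x y) :=
    monotoneOn_Icc_of_hasDerivAt_nonneg
      (fun t ht => (((hasDerivAt_id t).const_mul (f x)).sub (hF t ht)).sub
        ((((hF t ht).sub_const (F x)).pow 2).const_mul (β / 2)))
      (fun t ht => by
        have hsub : Icc x t ⊆ Icc x y := Icc_subset_Icc_right ht.2.le
        have := mul_mul_sub_le_sub (fun s hs => hF s (hsub hs)) (fun s hs => hf s (hsub hs))
          (fun s hs => hpos s (hsub hs)) hβ₀
          (fun s hs => hβ s (Ioo_subset_Ioo_right ht.2.le hs)) ht.1.le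
        norm_num
        linear_combination this)
  have := hmono (left_mem_Icc.2 hxy) (right_mem_Icc.2 hxy) hxy
  norm_num at this
  linarith

end

section

variable {F : ℝ → ℝ} {ε : ℝ}

theorem betaBar_nonneg (hf' : ∀ x ∈ Ici (0 : ℝ), deriv (deriv F) x ≤ 0) : 0 ≤ betaBar F ε :=
  Real.sInf_nonneg fun _ ⟨x, hx, _, hy⟩ => hy ▸ div_nonneg (neg_nonneg.2 (hf' x hx)) (sq_nonneg _)

theorem betaBar_le (hf' : ∀ x ∈ Ici (0 : ℝ), deriv (deriv F) x ≤ 0) {x : ℝ} (hx : 0 ≤ x)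
    (hFx : F x ≤ 1 - ε) : betaBar F ε ≤ -deriv (deriv F) x / deriv F x ^ 2 :=
  csInf_le ⟨0, fun _ ⟨x, hx, _, hy⟩ => hy ▸ div_nonneg (neg_nonneg.2 (hf' x hx)) (sq_nonneg _)⟩
    ⟨x, hx, hFx, rfl⟩

end

theorem increment_ratio_lower_bound_general (F : ℝ → ℝ)
    (hmono : StrictMonoOn F (Set.Ici 0))
    (hf : ∀ x ∈ Set.Ici (0 : ℝ), 0 < deriv F x)
    (hf' : ∀ x ∈ Set.Ici (0 : ℝ), deriv (deriv F) x < 0)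
    (k j : ℕ) (hj : 1 ≤ j) (hjk : j ≤ k - 2)
    (a b c : ℝ) (ha : a ∈ Set.Ici (0 : ℝ)) (hb : b ∈ Set.Ici (0 : ℝ))
    (hc : c ∈ Set.Ici (0 : ℝ))
    (hFa : F a = ((j : ℝ) - 1) / k) (hFb : F b = (j : ℝ) / k)
    (hFc : F c = ((j : ℝ) + 1) / k) :
    (c - b) / (b - a) ≥ 1 + (1 / (2 * (k : ℝ))) * betaBar F (1 / (2 * (k : ℝ))) := by
  have hjk' : (j : ℝ) + 2 ≤ k := by exact_mod_cast (by omega : j + 2 ≤ k)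
  have hk : (0 : ℝ) < k := by linarith
  set ε : ℝ := 1 / (2 * (k : ℝ)) with hε
  set β := betaBar F ε
  -- `deriv` is `0` where `F` is not differentiable, so `hf` and `hf'` give differentiability.
  have hFd (x) (hx : x ∈ Ici (0 : ℝ)) : HasDerivAt F (deriv F x) x :=
    (differentiableAt_of_deriv_ne_zero (hf x hx).ne').hasDerivAt
  have hfd (x) (hx : x ∈ Ici (0 : ℝ)) : HasDerivAt (deriv F) (deriv (deriv F) x) x :=
    (differentiableAt_of_deriv_ne_zero (hf' x hx).ne).hasDerivAt
  have hab : a < b := (hmono.lt_iff_lt ha hb).1 (by rw [hFa, hFb]; gcongr; linarith)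
  have hbc : b < c := (hmono.lt_iff_lt hb hc).1 (by rw [hFb, hFc]; gcongr; linarith)
  have hFab : F b - F a = 2 * ε := by rw [hFa, hFb, hε]; field_simp; ring
  have hFbc : F c - F b = 2 * ε := by rw [hFb, hFc, hε]; field_simp; ring
  have hFc_le : F c ≤ 1 - ε := by
    rw [hFc, hε, div_le_iff₀ hk]; field_simp; linarith
  have hβ₀ : 0 ≤ β := betaBar_nonneg fun x hx => (hf' x hx).le
  have hIcc {x y : ℝ} (hx : x ∈ Ici (0 : ℝ)) : Icc x y ⊆ Ici 0 := fun t ht => hx.trans ht.1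
  have hleft : deriv F b * (b - a) ≤ 2 * ε := hFab ▸ mul_sub_le_sub_of_antitoneOn
    (fun t ht => hFd t (hIcc ha ht))
    (antitoneOn_Icc_of_hasDerivAt_nonpos (fun t ht => hfd t (hIcc ha ht))
      fun t ht => (hf' t (hIcc ha (Ioo_subset_Icc_self ht))).le) hab.le
  have hright : 2 * ε + β / 2 * (2 * ε) ^ 2 ≤ deriv F b * (c - b) := hFbc ▸
    sub_add_mul_sq_le_mul_sub (fun t ht => hFd t (hIcc hb ht)) (fun t ht => hfd t (hIcc hb ht))
      (fun t ht => hf t (hIcc hb ht)) hβ₀ (fun t ht => betaBar_le (fun x hx => (hf' x hx).le)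
        (hIcc hb (Ioo_subset_Icc_self ht))
        (hmono.monotoneOn (hIcc hb (Ioo_subset_Icc_self ht)) hc ht.2.le |>.trans hFc_le)) hbc.le
  rw [ge_iff_le, le_div_iff₀ (sub_pos.2 hab)]
  refine le_of_mul_le_mul_left ?_ (hf b hb)
  calc deriv F b * ((1 + ε * β) * (b - a)) = (1 + ε * β) * (deriv F b * (b - a)) := by ring
    _ ≤ (1 + ε * β) * (2 * ε) := by gcongr
    _ = 2 * ε + β / 2 * (2 * ε) ^ 2 := by ring
    _ ≤ deriv F b * (c - b) := hright

/-- for grid points `a = F⁻¹((j−1)/k)`, `b = F⁻¹(j/k)`,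
`c = F⁻¹((j+1)/k)` with `1 ≤ j ≤ k−2`, the ratio of consecutive increments
satisfies `(c − b)/(b − a) ≥ 1 + (1/(2k)) β̄(1/(2k))`. -/
theorem increment_ratio_lower_bound (F : ℝ → ℝ)
    (hC2 : ContDiffOn ℝ 2 F (Set.Ici 0))
    (hF0 : F 0 = 0)
    (hmono : StrictMonoOn F (Set.Ici 0))
    (hf : ∀ x ∈ Set.Ici (0 : ℝ), 0 < deriv F x)
    (hf' : ∀ x ∈ Set.Ici (0 : ℝ), deriv (deriv F) x < 0)
    (k j : ℕ) (hj : 1 ≤ j) (hjk : j ≤ k - 2)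
    (a b c : ℝ) (ha : a ∈ Set.Ici (0 : ℝ)) (hb : b ∈ Set.Ici (0 : ℝ))
    (hc : c ∈ Set.Ici (0 : ℝ))
    (hFa : F a = ((j : ℝ) - 1) / k) (hFb : F b = (j : ℝ) / k)
    (hFc : F c = ((j : ℝ) + 1) / k) :
    (c - b) / (b - a) ≥ 1 + (1 / (2 * (k : ℝ))) * betaBar F (1 / (2 * (k : ℝ))) :=
  increment_ratio_lower_bound_general F hmono hf hf' k j hj hjk a b c ha hb hc hFa hFb hFc
end
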